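/- Let 1/2 < b < 1 and 0 < c < 1/2 with b - c > 1/4. Then the double sum Σ_{k∈ℤ} Σ_{k'∈ℤ} 1/(⟨k⟩^{2(b-c)} · ⟨k'⟩^{2(b-c)} · ⟨k-k'⟩^{2b}) is finite. -/

import Mathlib

/-!
With `a = 2(b - c)`, AM-GM gives `⟨k⟩^{-a} ⟨k'⟩^{-a} ≤ (⟨k⟩^{-2a} + ⟨k'⟩^{-2a}) / 2`, so the
summand is dominated by `⟨k⟩^{-2a} ⟨k - k'⟩^{-2b}` and `⟨k'⟩^{-2a} ⟨k - k'⟩^{-2b}`. A shear of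
`ℤ × ℤ` turns each of these into a product of two one-variable series, which converge because
`2a > 1` and `2b > 1`.
-/

/-- The Japanese bracket `⟨x⟩ = (1 + x²)^{1/2}`. -/
noncomputable def jb (x : ℝ) : ℝ := Real.sqrt (1 + x ^ 2)

lemma jb_pos (x : ℝ) : 0 < jb x := Real.sqrt_pos.mpr (by positivity)

lemma abs_le_jb (x : ℝ) : |x| ≤ jb x := by
  rw [jb, ← Real.sqrt_sq_eq_abs]
  exact Real.sqrt_le_sqrt (by linarith)

lemma summable_one_div_jb_rpow {p : ℝ} (hp : 1 < p) :
    Summable fun n : ℤ => 1 / jb n ^ p := by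
  refine (Real.summable_abs_int_rpow hp).of_norm_bounded_eventually ?_
  filter_upwards [Filter.eventually_cofinite_ne 0] with n hn
  have hn : 0 < |(n : ℝ)| := by positivity
  rw [Real.norm_of_nonneg (by have := jb_pos n; positivity), Real.rpow_neg hn.le, ← one_div]
  gcongr
  exact abs_le_jb n

section Convolution

variable {G : Type*} [AddGroup G] {f g : G → ℝ}

theorem summable_comp_fst_mul_comp_sub (hf : Summable f) (hg : Summable g) (hf0 : 0 ≤ f)
    (hg0 : 0 ≤ g) : Summable fun p : G × G => f p.1 * g (p.1 - p.2) :=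
  (Equiv.prodShear (Equiv.refl G) Equiv.subLeft).summable_iff.mpr
    (hf.mul_of_nonneg hg hf0 hg0)

theorem summable_comp_snd_mul_comp_sub (hf : Summable f) (hg : Summable g) (hf0 : 0 ≤ f)
    (hg0 : 0 ≤ g) : Summable fun p : G × G => f p.2 * g (p.1 - p.2) :=
  ((Equiv.prodComm G G).trans (Equiv.prodShear (Equiv.refl G) Equiv.subRight)).summable_iff.mpr
    (hf.mul_of_nonneg hg hf0 hg0)

end Convolution

theorem double_sum_finite_general (b c : ℝ) (hb0 : 1 / 2 < b) (hbc : 1 / 4 < b - c) :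
    Summable (fun p : ℤ × ℤ =>
      1 / (jb (p.1 : ℝ) ^ (2 * (b - c)) * jb (p.2 : ℝ) ^ (2 * (b - c)) *
        jb ((p.1 : ℝ) - (p.2 : ℝ)) ^ (2 * b))) := by
  set w : ℤ → ℝ := fun n => 1 / jb n ^ (2 * (b - c))
  set v : ℤ → ℝ := fun n => 1 / jb n ^ (2 * b)
  have hv0 : 0 ≤ v := fun n => by have := jb_pos n; positivity
  have hw2 : Summable fun n => w n ^ 2 := by
    refine (summable_one_div_jb_rpow (p := 2 * (2 * (b - c))) (by linarith)).congr fun n => ?_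
    rw [div_pow, one_pow, ← Real.rpow_natCast, ← Real.rpow_mul (jb_pos n).le, mul_comm]
    norm_num
  have hv : Summable v := summable_one_div_jb_rpow (by linarith)
  refine Summable.of_nonneg_of_le (fun p => ?_) (fun p => ?_)
    (((summable_comp_fst_mul_comp_sub hw2 hv (fun n => sq_nonneg _) hv0).add
      (summable_comp_snd_mul_comp_sub hw2 hv (fun n => sq_nonneg _) hv0)).div_const 2)
  · have := jb_pos p.1; have := jb_pos p.2; have := jb_pos (p.1 - p.2); positivity
  · have hsplit : 1 / (jb p.1 ^ (2 * (b - c)) * jb p.2 ^ (2 * (b - c)) *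
        jb ((p.1 : ℝ) - p.2) ^ (2 * b)) = w p.1 * w p.2 * v (p.1 - p.2) := by
      simp only [w, v, Int.cast_sub, one_div, mul_inv]
    rw [hsplit]
    nlinarith [mul_le_mul_of_nonneg_right (two_mul_le_add_sq (w p.1) (w p.2)) (hv0 (p.1 - p.2))]

/-- Finiteness of the double sum appearing in the control of the localized random
operator: for `1/2 < b < 1` and `0 < c < 1/2` with `b - c > 1/4`,
`∑_{k,k'∈ℤ} ⟨k⟩^{-2(b-c)} ⟨k'⟩^{-2(b-c)} ⟨k-k'⟩^{-2b} < ∞`. -/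
theorem double_sum_finite (b c : ℝ) (hb0 : 1 / 2 < b) (hb1 : b < 1)
    (hc0 : 0 < c) (hc1 : c < 1 / 2) (hbc : 1 / 4 < b - c) :
    Summable (fun p : ℤ × ℤ =>
      1 / (jb (p.1 : ℝ) ^ (2 * (b - c)) * jb (p.2 : ℝ) ^ (2 * (b - c)) *
        jb ((p.1 : ℝ) - (p.2 : ℝ)) ^ (2 * b))) :=
  double_sum_finite_general b c hb0 hbc
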